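/- Let M be an n×n real symmetric matrix with ‖M‖_op ≤ 2√n, and let M' = M + E where E is symmetric. Suppose ‖M'‖_op > 10√n, and let v and u be unit left and right singular vectors of M' corresponding to its leading singular value. Let Q ⊆ [n] be the support of E (i.e., E_{ij} = 0 unless i ∈ Q and j ∈ Q), and let ṽ, ũ be the restrictions of v, u to the coordinates in Q. Then (‖ṽ‖² + ‖ũ‖²)/2 ≥ 1/2. -/

import Mathlib

open Matrix

/-- The ℓ²→ℓ² operator norm of a real square matrix. -/
noncomputable def matOpNorm {n : ℕ} (M : Matrix (Fin n) (Fin n) ℝ) : ℝ :=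
  ‖(Matrix.toEuclideanCLM (𝕜 := ℝ) M)‖

/-!
The bilinear form of `M + E` at the leading singular pair is `‖M + E‖_op`. The part coming from
`M` is at most `‖M‖_op ≤ 2√n`; the part coming from `E` only sees the restrictions `ṽ, ũ` of
`v, u` to `Q`, so it is at most `‖E‖_op ‖ṽ‖ ‖ũ‖ ≤ (‖M + E‖_op + 2√n) t` with
`t = (‖ṽ‖² + ‖ũ‖²)/2`. If `t < 1/2` this forces `‖M + E‖_op < 6√n`.
-/

lemma matOpNorm_nonneg {n : ℕ} (A : Matrix (Fin n) (Fin n) ℝ) : 0 ≤ matOpNorm A :=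
  norm_nonneg _

lemma matOpNorm_sub_le {n : ℕ} (A B : Matrix (Fin n) (Fin n) ℝ) :
    matOpNorm (A - B) ≤ matOpNorm A + matOpNorm B := by
  unfold matOpNorm
  rw [map_sub]
  exact norm_sub_le _ _

lemma dotProduct_mulVec_le_matOpNorm_mul {n : ℕ} (A : Matrix (Fin n) (Fin n) ℝ)
    (x y : Fin n → ℝ) :
    x ⬝ᵥ A *ᵥ y ≤ matOpNorm A * ((∑ i, x i ^ 2 + ∑ i, y i ^ 2) / 2) := by
  set x' : EuclideanSpace ℝ (Fin n) := WithLp.toLp 2 x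
  set y' : EuclideanSpace ℝ (Fin n) := WithLp.toLp 2 y
  have hx : ‖x'‖ ^ 2 = ∑ i, x i ^ 2 := EuclideanSpace.real_norm_sq_eq x'
  have hy : ‖y'‖ ^ 2 = ∑ i, y i ^ 2 := EuclideanSpace.real_norm_sq_eq y'
  have hA := matOpNorm_nonneg A
  calc x ⬝ᵥ A *ᵥ y = inner ℝ x' (toEuclideanCLM (𝕜 := ℝ) A y') :=
        (inner_toEuclideanCLM A x' y').symm
    _ ≤ ‖x'‖ * ‖toEuclideanCLM (𝕜 := ℝ) A y'‖ := real_inner_le_norm _ _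
    _ ≤ ‖x'‖ * (matOpNorm A * ‖y'‖) := by
        gcongr
        exact (toEuclideanCLM (𝕜 := ℝ) A).le_opNorm y'
    _ ≤ matOpNorm A * ((∑ i, x i ^ 2 + ∑ i, y i ^ 2) / 2) := by
        rw [← hx, ← hy]
        nlinarith [mul_nonneg hA (sq_nonneg (‖x'‖ - ‖y'‖))]

lemma dotProduct_mulVec_eq_indicator {ι R : Type*} [Fintype ι] [NonUnitalNonAssocSemiring R]
    (E : Matrix ι ι R) (Q : Finset ι) (hsupp : ∀ i j, ¬(i ∈ Q ∧ j ∈ Q) → E i j = 0)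
    (v u : ι → R) :
    v ⬝ᵥ E *ᵥ u = (Q : Set ι).indicator v ⬝ᵥ E *ᵥ (Q : Set ι).indicator u := by
  simp only [dotProduct, mulVec, Finset.mul_sum]
  refine Finset.sum_congr rfl fun i _ => Finset.sum_congr rfl fun j _ => ?_
  by_cases h : i ∈ Q ∧ j ∈ Q
  · simp [h.1, h.2]
  · simp [hsupp i j h]

lemma sum_indicator_sq {ι R : Type*} [Fintype ι] [Semiring R]
    (Q : Finset ι) (v : ι → R) :
    ∑ i, (Q : Set ι).indicator v i ^ 2 = ∑ i ∈ Q, v i ^ 2 := by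
  classical
  simp [Set.indicator_apply, apply_ite (· ^ 2), Finset.sum_ite_mem]

theorem stmt4_general {n : ℕ} (M E : Matrix (Fin n) (Fin n) ℝ)
    (hMop : matOpNorm M ≤ 2 * Real.sqrt n)
    (Q : Finset (Fin n))
    (hsupp : ∀ i j, ¬(i ∈ Q ∧ j ∈ Q) → E i j = 0)
    (hM'op : matOpNorm (M + E) > 10 * Real.sqrt n)
    (v u : Fin n → ℝ)
    (hv : ∑ i, v i ^ 2 = 1) (hu : ∑ i, u i ^ 2 = 1)
    (hsing : v ⬝ᵥ (M + E).mulVec u = matOpNorm (M + E)) :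
    ((∑ i ∈ Q, v i ^ 2) + (∑ i ∈ Q, u i ^ 2)) / 2 ≥ 1 / 2 := by
  set t := ((∑ i ∈ Q, v i ^ 2) + (∑ i ∈ Q, u i ^ 2)) / 2
  have hM : v ⬝ᵥ M *ᵥ u ≤ 2 * Real.sqrt n := by
    have h := dotProduct_mulVec_le_matOpNorm_mul M v u
    rw [hv, hu] at h
    linarith
  have hEop : matOpNorm E ≤ matOpNorm (M + E) + 2 * Real.sqrt n := by
    have h := matOpNorm_sub_le (M + E) M
    rw [add_sub_cancel_left] at h
    linarith
  have hE : v ⬝ᵥ E *ᵥ u ≤ (matOpNorm (M + E) + 2 * Real.sqrt n) * t := by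
    have h := dotProduct_mulVec_le_matOpNorm_mul E ((Q : Set (Fin n)).indicator v)
      ((Q : Set (Fin n)).indicator u)
    rw [sum_indicator_sq, sum_indicator_sq, ← dotProduct_mulVec_eq_indicator E Q hsupp] at h
    exact h.trans (mul_le_mul_of_nonneg_right hEop (by positivity))
  have hsplit : matOpNorm (M + E) = v ⬝ᵥ M *ᵥ u + v ⬝ᵥ E *ᵥ u := by
    rw [← hsing, add_mulVec, dotProduct_add]
  by_contra! ht
  have hsqrt := Real.sqrt_nonneg (n : ℝ)
  have hpos : 0 ≤ matOpNorm (M + E) + 2 * Real.sqrt n := by linarith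
  nlinarith [mul_le_mul_of_nonneg_left ht.le hpos]

/-- If ‖M‖_op ≤ 2√n, M' = M + E with E symmetric supported on Q × Q,
‖M'‖_op > 10√n, and v, u are unit left/right singular vectors of M' for the leading
singular value, then the restrictions ṽ, ũ of v, u to Q satisfy (‖ṽ‖² + ‖ũ‖²)/2 ≥ 1/2. -/
theorem stmt4 {n : ℕ} (M E : Matrix (Fin n) (Fin n) ℝ)
    (hM : M.IsSymm) (hE : E.IsSymm)
    (hMop : matOpNorm M ≤ 2 * Real.sqrt n)
    (Q : Finset (Fin n))
    (hsupp : ∀ i j, ¬(i ∈ Q ∧ j ∈ Q) → E i j = 0)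
    (hM'op : matOpNorm (M + E) > 10 * Real.sqrt n)
    (v u : Fin n → ℝ)
    (hv : ∑ i, v i ^ 2 = 1) (hu : ∑ i, u i ^ 2 = 1)
    (hsing : v ⬝ᵥ (M + E).mulVec u = matOpNorm (M + E)) :
    ((∑ i ∈ Q, v i ^ 2) + (∑ i ∈ Q, u i ^ 2)) / 2 ≥ 1 / 2 :=
  stmt4_general M E hMop Q hsupp hM'op v u hv hu hsing
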